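/- (Explicit solution of the lossless linearized three-phase model; this yields the paper's gradient formulas (10c)–(10d): ∂v̂_j^{φφ}/∂p_h^ψ = R_{jh}^{φψ} and ∂v̂_j^{φφ}/∂q_h^ψ = X_{jh}^{φψ}.) Assume the rooted tree setup, the phase setup, and the lossless linearized model of the context, with injections s_h^ψ = p_h^ψ + i·q_h^ψ where p_h^ψ and q_h^ψ are real. Then for every bus j and every phase φ ∈ Φ_j, the diagonal voltage entry satisfies v̂_j^{φφ} = v̂_0^{φφ} + Σ_{h=1}^{N} Σ_{ψ ∈ Φ_h} ( R_{jh}^{φψ} · p_h^ψ + X_{jh}^{φψ} · q_h^ψ ), where R_{jh}^{φψ} := 2 Σ_{ξ ∈ P_j ∩ P_h} Re( conj(z_ξ^{φψ}) · α^{φ−ψ} ) and X_{jh}^{φψ} := −2 Σ_{ξ ∈ P_j ∩ P_h} Im( conj(z_ξ^{φψ}) · α^{φ−ψ} ) (the entries z_ξ^{φψ} are well defined since φ ∈ Φ_j ⊆ Φ_ξ and ψ ∈ Φ_h ⊆ Φ_ξ for every ξ ∈ P_j ∩ P_h). -/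
import Mathlib


attribute [local instance] Classical.propDecidable

/-- `i` is an ancestor of `h`: `i` is obtained from `h` by iterating the parent map. -/
def isAnc {N : ℕ} (par : Fin (N + 1) → Fin (N + 1)) (i h : Fin (N + 1)) : Prop :=
  ∃ n : ℕ, par^[n] h = i

/-- The path set of bus `h`: all non-root ancestors of `h`. -/
noncomputable def pathSet {N : ℕ} (par : Fin (N + 1) → Fin (N + 1)) (h : Fin (N + 1)) :
    Finset (Fin (N + 1)) :=
  Finset.univ.filter (fun i => i ≠ 0 ∧ isAnc par i h)

/-- Children of bus `j`: non-root buses whose parent is `j`. -/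
noncomputable def children {N : ℕ} (par : Fin (N + 1) → Fin (N + 1)) (j : Fin (N + 1)) :
    Finset (Fin (N + 1)) :=
  Finset.univ.filter (fun k => k ≠ 0 ∧ par k = j)

/-- `α = exp(−2πi/3)`. -/
noncomputable def alphaPh : ℂ := Complex.exp (-(2 * Real.pi * Complex.I) / 3)

/-- `R_{jh}^{φψ} := 2 Σ_{ξ ∈ P_j ∩ P_h} Re( conj(z_ξ^{φψ}) · α^{φ−ψ} )`. -/
noncomputable def Rcoef {N : ℕ} (par : Fin (N + 1) → Fin (N + 1))
    (z : Fin (N + 1) → Matrix (Fin 3) (Fin 3) ℂ)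
    (j h : Fin (N + 1)) (φ ψ : Fin 3) : ℝ :=
  2 * ∑ ξ ∈ pathSet par j ∩ pathSet par h,
      ((starRingEnd ℂ) (z ξ φ ψ) * alphaPh ^ ((φ.val : ℤ) - (ψ.val : ℤ))).re

/-- `X_{jh}^{φψ} := −2 Σ_{ξ ∈ P_j ∩ P_h} Im( conj(z_ξ^{φψ}) · α^{φ−ψ} )`. -/
noncomputable def Xcoef {N : ℕ} (par : Fin (N + 1) → Fin (N + 1))
    (z : Fin (N + 1) → Matrix (Fin 3) (Fin 3) ℂ)
    (j h : Fin (N + 1)) (φ ψ : Fin 3) : ℝ :=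
  -2 * ∑ ξ ∈ pathSet par j ∩ pathSet par h,
      ((starRingEnd ℂ) (z ξ φ ψ) * alphaPh ^ ((φ.val : ℤ) - (ψ.val : ℤ))).im

section Aux
variable {N : ℕ} {par : Fin (N + 1) → Fin (N + 1)} {dep : Fin (N + 1) → ℕ}

lemma iter_zero (hpar0 : par 0 = 0) (n : ℕ) : par^[n] (0 : Fin (N + 1)) = 0 :=
  Function.iterate_fixed hpar0 n

lemma dep_iter_le (hpar0 : par 0 = 0)
    (hdep : ∀ j : Fin (N + 1), j ≠ 0 → dep (par j) < dep j)
    (x : Fin (N + 1)) : ∀ n, dep (par^[n] x) ≤ dep x := by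
  intro n
  induction n with
  | zero => simp
  | succ m ih =>
    rw [Function.iterate_succ_apply']
    by_cases h : par^[m] x = 0
    · rw [h, hpar0, ← h]; exact ih
    · exact le_trans (le_of_lt (hdep _ h)) ih

lemma no_cycle (hpar0 : par 0 = 0)
    (hdep : ∀ j : Fin (N + 1), j ≠ 0 → dep (par j) < dep j)
    {j : Fin (N + 1)} (hj : j ≠ 0) (n : ℕ) : par^[n + 1] j ≠ j := by
  intro hcyc
  by_cases h : par^[n] j = 0
  · rw [Function.iterate_succ_apply', h, hpar0] at hcyc
    exact hj hcyc.symm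
  · have h1 : dep (par^[n + 1] j) < dep (par^[n] j) := by
      rw [Function.iterate_succ_apply']; exact hdep _ h
    have h2 := dep_iter_le hpar0 hdep j n
    rw [hcyc] at h1
    omega

lemma mem_pathSet {i h : Fin (N + 1)} :
    i ∈ pathSet par h ↔ i ≠ 0 ∧ isAnc par i h := by
  simp [pathSet]

lemma pathSet_zero (hpar0 : par 0 = 0) : pathSet par (0 : Fin (N + 1)) = ∅ := by
  ext i
  simp only [pathSet, Finset.mem_filter, Finset.mem_univ, true_and, Finset.notMem_empty,
    iff_false, not_and]
  rintro hi ⟨n, hn⟩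
  exact hi (by rw [← hn, iter_zero hpar0])

lemma isAnc_split {i h : Fin (N + 1)} :
    isAnc par i h ↔ i = h ∨ isAnc par i (par h) := by
  constructor
  · rintro ⟨n, hn⟩
    cases n with
    | zero => exact Or.inl hn.symm
    | succ m => exact Or.inr ⟨m, by rwa [Function.iterate_succ_apply] at hn⟩
  · rintro (rfl | ⟨m, hm⟩)
    · exact ⟨0, rfl⟩
    · exact ⟨m + 1, by rwa [Function.iterate_succ_apply]⟩

lemma pathSet_insert {j : Fin (N + 1)} (hj : j ≠ 0) :
    pathSet par j = insert j (pathSet par (par j)) := by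
  ext i
  simp only [mem_pathSet, Finset.mem_insert, isAnc_split (i := i) (h := j)]
  constructor
  · rintro ⟨hi0, rfl | ha⟩
    · exact Or.inl rfl
    · exact Or.inr ⟨hi0, ha⟩
  · rintro (rfl | ⟨hi0, ha⟩)
    · exact ⟨hj, Or.inl rfl⟩
    · exact ⟨hi0, Or.inr ha⟩

lemma notMem_pathSet_parent (hpar0 : par 0 = 0)
    (hdep : ∀ j : Fin (N + 1), j ≠ 0 → dep (par j) < dep j)
    {j : Fin (N + 1)} (hj : j ≠ 0) : j ∉ pathSet par (par j) := by
  intro hmem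
  obtain ⟨-, m, hm⟩ := mem_pathSet.mp hmem
  exact no_cycle hpar0 hdep hj m (by rwa [Function.iterate_succ_apply])

lemma Phi_iter {Φ : Fin (N + 1) → Finset (Fin 3)} (hpar0 : par 0 = 0)
    (hΦsub : ∀ j : Fin (N + 1), j ≠ 0 → Φ j ⊆ Φ (par j)) :
    ∀ n (h : Fin (N + 1)), par^[n] h ≠ 0 → Φ h ⊆ Φ (par^[n] h) := by
  intro n
  induction n with
  | zero => intro h _; simp
  | succ m ih =>
    intro h hne
    have hm : par^[m] h ≠ 0 := by
      intro h0
      rw [Function.iterate_succ_apply', h0, hpar0] at hne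
      exact hne rfl
    rw [Function.iterate_succ_apply']
    exact (ih h hm).trans (hΦsub _ hm)

lemma Phi_anc {Φ : Fin (N + 1) → Finset (Fin 3)} (hpar0 : par 0 = 0)
    (hΦsub : ∀ j : Fin (N + 1), j ≠ 0 → Φ j ⊆ Φ (par j))
    {i h : Fin (N + 1)} (hanc : isAnc par i h) (hi0 : i ≠ 0) : Φ h ⊆ Φ i := by
  obtain ⟨n, rfl⟩ := hanc
  exact Phi_iter hpar0 hΦsub n h hi0

lemma anc_comparable {h k k' : Fin (N + 1)} (h1 : isAnc par k h) (h2 : isAnc par k' h) :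
    isAnc par k' k ∨ isAnc par k k' := by
  obtain ⟨a, ha⟩ := h1
  obtain ⟨b, hb⟩ := h2
  rcases le_total a b with hab | hab
  · exact Or.inl ⟨b - a, by rw [← ha, ← Function.iterate_add_apply, Nat.sub_add_cancel hab, hb]⟩
  · exact Or.inr ⟨a - b, by rw [← hb, ← Function.iterate_add_apply, Nat.sub_add_cancel hab, ha]⟩

lemma child_anc_unique (hpar0 : par 0 = 0)
    (hdep : ∀ j : Fin (N + 1), j ≠ 0 → dep (par j) < dep j)
    {j h k k' : Fin (N + 1)} (hj : j ≠ 0)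
    (hk : par k = j) (hk' : par k' = j)
    (h1 : isAnc par k h) (h2 : isAnc par k' h) : k = k' := by
  have key : ∀ a b : Fin (N + 1), par a = j → par b = j → isAnc par b a → a = b := by
    intro a b hpa hpb ⟨c, hc⟩
    cases c with
    | zero => simpa using hc
    | succ m =>
      exfalso
      have hb : b = par^[m] j := by rw [← hc, Function.iterate_succ_apply, hpa]
      have hcyc : par^[m + 1] j = j := by rw [Function.iterate_succ_apply', ← hb, hpb]
      exact no_cycle hpar0 hdep hj m hcyc
  rcases anc_comparable h1 h2 with hc | hc
  · exact key k k' hk hk' hc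
  · exact (key k' k hk' hk hc).symm

lemma lambda_sol
    (hpar0 : par 0 = 0)
    (hdep : ∀ j : Fin (N + 1), j ≠ 0 → dep (par j) < dep j)
    {Φ : Fin (N + 1) → Finset (Fin 3)}
    (hΦsub : ∀ j : Fin (N + 1), j ≠ 0 → Φ j ⊆ Φ (par j))
    (s : Fin (N + 1) → Fin 3 → ℂ)
    (Λhat : Fin (N + 1) → Fin 3 → ℂ)
    (hΛhat : ∀ j : Fin (N + 1), j ≠ 0 → ∀ ψ ∈ Φ j,
      Λhat j ψ = (∑ k ∈ children par j, if ψ ∈ Φ k then Λhat k ψ else 0) - s j ψ) :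
    ∀ j : Fin (N + 1), j ≠ 0 → ∀ ψ ∈ Φ j,
      Λhat j ψ
        = -∑ h ∈ Finset.univ.filter (fun h => j ∈ pathSet par h ∧ ψ ∈ Φ h), s h ψ := by
  set D := Finset.univ.sup dep with hD
  have hdepD : ∀ x : Fin (N + 1), dep x ≤ D := fun x => Finset.le_sup (Finset.mem_univ x)
  suffices H : ∀ n, ∀ j : Fin (N + 1), D - dep j = n → j ≠ 0 → ∀ ψ ∈ Φ j,
      Λhat j ψ
        = -∑ h ∈ Finset.univ.filter (fun h => j ∈ pathSet par h ∧ ψ ∈ Φ h), s h ψ by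
    exact fun j hj ψ hψ => H _ j rfl hj ψ hψ
  intro n
  induction n using Nat.strong_induction_on with
  | _ n ih =>
  intro j hn hj ψ hψ
  rw [hΛhat j hj ψ hψ]
  have hchild : ∀ k ∈ children par j, (if ψ ∈ Φ k then Λhat k ψ else 0)
      = if ψ ∈ Φ k then
          -∑ h ∈ Finset.univ.filter (fun h => k ∈ pathSet par h ∧ ψ ∈ Φ h), s h ψ
        else 0 := by
    intro k hk
    by_cases hψk : ψ ∈ Φ k
    · rw [if_pos hψk, if_pos hψk]
      obtain ⟨-, hk0, hpk⟩ := Finset.mem_filter.mp hk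
      have hdk : dep j < dep k := by rw [← hpk]; exact hdep k hk0
      have hklt : D - dep k < n := by have := hdepD k; have := hdepD j; omega
      exact ih _ hklt k rfl hk0 ψ hψk
    · rw [if_neg hψk, if_neg hψk]
  rw [Finset.sum_congr rfl hchild]
  have hsimpl : ∀ k ∈ children par j,
      (if ψ ∈ Φ k then
          -∑ h ∈ Finset.univ.filter (fun h => k ∈ pathSet par h ∧ ψ ∈ Φ h), s h ψ
        else 0)
      = -∑ h ∈ Finset.univ.filter (fun h => k ∈ pathSet par h ∧ ψ ∈ Φ h), s h ψ := by
    intro k hk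
    by_cases hψk : ψ ∈ Φ k
    · rw [if_pos hψk]
    · rw [if_neg hψk]
      have : Finset.univ.filter (fun h => k ∈ pathSet par h ∧ ψ ∈ Φ h) = ∅ := by
        apply Finset.filter_eq_empty_iff.mpr
        rintro h - ⟨hkh, hψh⟩
        obtain ⟨hk0, hanc⟩ := mem_pathSet.mp hkh
        exact hψk (Phi_anc hpar0 hΦsub hanc hk0 hψh)
      rw [this, Finset.sum_empty, neg_zero]
  rw [Finset.sum_congr rfl hsimpl]
  have hjmem : j ∈ Finset.univ.filter (fun h => j ∈ pathSet par h ∧ ψ ∈ Φ h) := by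
    refine Finset.mem_filter.mpr ⟨Finset.mem_univ _, mem_pathSet.mpr ⟨hj, 0, rfl⟩, hψ⟩
  have key : ∑ h ∈ Finset.univ.filter (fun h => j ∈ pathSet par h ∧ ψ ∈ Φ h), s h ψ
      = s j ψ + ∑ k ∈ children par j,
          ∑ h ∈ Finset.univ.filter (fun h => k ∈ pathSet par h ∧ ψ ∈ Φ h), s h ψ := by
    rw [← Finset.add_sum_erase _ _ hjmem]
    congr 1
    have hpt : ∀ h : Fin (N + 1),
        (∑ k ∈ children par j, if k ∈ pathSet par h ∧ ψ ∈ Φ h then s h ψ else 0)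
        = if ((j ∈ pathSet par h ∧ ψ ∈ Φ h) ∧ h ≠ j) then s h ψ else 0 := by
      intro h
      by_cases hcond : (j ∈ pathSet par h ∧ ψ ∈ Φ h) ∧ h ≠ j
      · obtain ⟨⟨hjh, hψh⟩, hne⟩ := hcond
        obtain ⟨-, m0, hm0⟩ := mem_pathSet.mp hjh
        rcases m0 with - | m
        · exact absurd (show h = j by simpa using hm0) hne
        set k := par^[m] h with hkdef
        have hkpar : par k = j := by
          rw [hkdef, ← Function.iterate_succ_apply' par m h]
          exact hm0
        have hk0 : k ≠ 0 := by
          intro h0; rw [h0, hpar0] at hkpar; exact hj hkpar.symm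
        have hkanc : isAnc par k h := ⟨m, rfl⟩
        have hkchild : k ∈ children par j :=
          Finset.mem_filter.mpr ⟨Finset.mem_univ _, hk0, hkpar⟩
        have hkpath : k ∈ pathSet par h := mem_pathSet.mpr ⟨hk0, hkanc⟩
        rw [Finset.sum_eq_single_of_mem k hkchild, if_pos ⟨hkpath, hψh⟩,
          if_pos ⟨⟨hjh, hψh⟩, hne⟩]
        intro k' hk' hne'
        rw [if_neg]
        rintro ⟨hk'path, -⟩
        obtain ⟨-, hk'0, hk'par⟩ := Finset.mem_filter.mp hk'
        obtain ⟨-, hk'anc⟩ := mem_pathSet.mp hk'path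
        exact hne' (child_anc_unique hpar0 hdep hj hk'par hkpar hk'anc hkanc)
      · rw [if_neg hcond]
        apply Finset.sum_eq_zero
        intro k hk
        rw [if_neg]
        rintro ⟨hkpath, hψh⟩
        obtain ⟨-, hk0, hkpar⟩ := Finset.mem_filter.mp hk
        obtain ⟨-, m, hm⟩ := mem_pathSet.mp hkpath
        have hjh : j ∈ pathSet par h := by
          refine mem_pathSet.mpr ⟨hj, m + 1, ?_⟩
          rw [Function.iterate_succ_apply', hm, hkpar]
        have hne : h ≠ j := by
          rintro rfl
          have hcy : par^[m + 1] h = h := by rw [Function.iterate_succ_apply', hm, hkpar]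
          exact no_cycle hpar0 hdep hj m hcy
        exact hcond ⟨⟨hjh, hψh⟩, hne⟩
    calc ∑ h ∈ (Finset.univ.filter (fun h => j ∈ pathSet par h ∧ ψ ∈ Φ h)).erase j, s h ψ
        = ∑ h ∈ Finset.univ.filter (fun h => (j ∈ pathSet par h ∧ ψ ∈ Φ h) ∧ h ≠ j),
            s h ψ := by
          apply Finset.sum_congr _ (fun _ _ => rfl)
          ext h
          simp only [Finset.mem_erase, Finset.mem_filter, Finset.mem_univ, true_and]
          tauto
      _ = ∑ h : Fin (N + 1),
            if ((j ∈ pathSet par h ∧ ψ ∈ Φ h) ∧ h ≠ j) then s h ψ else 0 := by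
          rw [Finset.sum_filter]
      _ = ∑ h : Fin (N + 1), ∑ k ∈ children par j,
            if k ∈ pathSet par h ∧ ψ ∈ Φ h then s h ψ else 0 := by
          exact Finset.sum_congr rfl (fun h _ => (hpt h).symm)
      _ = ∑ k ∈ children par j, ∑ h : Fin (N + 1),
            if k ∈ pathSet par h ∧ ψ ∈ Φ h then s h ψ else 0 := Finset.sum_comm
      _ = ∑ k ∈ children par j,
            ∑ h ∈ Finset.univ.filter (fun h => k ∈ pathSet par h ∧ ψ ∈ Φ h), s h ψ := by
          exact Finset.sum_congr rfl (fun k _ => (Finset.sum_filter _ _).symm)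
  rw [Finset.sum_neg_distrib]
  linear_combination key

end Aux

/-- Explicit solution of the lossless linearized three-phase model, yielding the
paper's gradient formulas (10c)–(10d):
`v̂_j^{φφ} = v̂_0^{φφ} + Σ_{h=1}^N Σ_{ψ ∈ Φ_h} (R_{jh}^{φψ} p_h^ψ + X_{jh}^{φψ} q_h^ψ)`. -/
theorem lossless_linear_model_solution {N : ℕ} (hN : 1 ≤ N)
    (par : Fin (N + 1) → Fin (N + 1)) (dep : Fin (N + 1) → ℕ)
    (hpar0 : par 0 = 0)
    (hdep : ∀ j : Fin (N + 1), j ≠ 0 → dep (par j) < dep j)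
    (Φ : Fin (N + 1) → Finset (Fin 3))
    (hΦne : ∀ j : Fin (N + 1), (Φ j).Nonempty)
    (hΦsub : ∀ j : Fin (N + 1), j ≠ 0 → Φ j ⊆ Φ (par j))
    (z : Fin (N + 1) → Matrix (Fin 3) (Fin 3) ℂ)
    (p q : Fin (N + 1) → Fin 3 → ℝ)
    (s : Fin (N + 1) → Fin 3 → ℂ)
    (hs : ∀ h : Fin (N + 1), ∀ ψ : Fin 3, s h ψ = (p h ψ : ℂ) + Complex.I * (q h ψ : ℂ))
    -- lossless linearized model
    (vhat Shat : Fin (N + 1) → Matrix (Fin 3) (Fin 3) ℂ)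
    (Λhat : Fin (N + 1) → Fin 3 → ℂ)
    (hvhat : ∀ j : Fin (N + 1), j ≠ 0 → ∀ φ ∈ Φ j, ∀ ψ ∈ Φ j,
      vhat j φ ψ = vhat (par j) φ ψ
        - ((∑ η ∈ Φ j, Shat j φ η * (starRingEnd ℂ) (z j ψ η))
            + ∑ η ∈ Φ j, z j φ η * (starRingEnd ℂ) (Shat j ψ η)))
    (hShat : ∀ j : Fin (N + 1), j ≠ 0 → ∀ φ ∈ Φ j, ∀ ψ ∈ Φ j,
      Shat j φ ψ = alphaPh ^ ((φ.val : ℤ) - (ψ.val : ℤ)) * Λhat j ψ)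
    (hΛhat : ∀ j : Fin (N + 1), j ≠ 0 → ∀ ψ ∈ Φ j,
      Λhat j ψ = (∑ k ∈ children par j, if ψ ∈ Φ k then Λhat k ψ else 0) - s j ψ) :
    ∀ j : Fin (N + 1), ∀ φ ∈ Φ j,
      vhat j φ φ = vhat 0 φ φ +
        ((∑ h ∈ Finset.univ.filter (fun h : Fin (N + 1) => h ≠ 0), ∑ ψ ∈ Φ h,
            (Rcoef par z j h φ ψ * p h ψ + Xcoef par z j h φ ψ * q h ψ) : ℝ) : ℂ) := by
  suffices H : ∀ n, ∀ j : Fin (N + 1), dep j = n → ∀ φ ∈ Φ j,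
      vhat j φ φ = vhat 0 φ φ +
        ((∑ h ∈ Finset.univ.filter (fun h : Fin (N + 1) => h ≠ 0), ∑ ψ ∈ Φ h,
            (Rcoef par z j h φ ψ * p h ψ + Xcoef par z j h φ ψ * q h ψ) : ℝ) : ℂ) by
    exact fun j φ hφ => H (dep j) j rfl φ hφ
  intro n
  induction n using Nat.strong_induction_on with
  | _ n ih =>
  intro j hdepj φ hφ
  by_cases hj : j = 0
  · subst hj
    have hR : ∀ (h : Fin (N + 1)) (ψ : Fin 3), Rcoef par z 0 h φ ψ = 0 := fun h ψ => by
      simp [Rcoef, pathSet_zero hpar0]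
    have hX : ∀ (h : Fin (N + 1)) (ψ : Fin 3), Xcoef par z 0 h φ ψ = 0 := fun h ψ => by
      simp [Xcoef, pathSet_zero hpar0]
    simp [hR, hX]
  · have hφi : φ ∈ Φ (par j) := hΦsub j hj hφ
    have hIH := ih (dep (par j)) (lt_of_lt_of_eq (hdep j hj) hdepj) (par j) rfl φ hφi
    set c : Fin 3 → ℂ :=
      fun η => (starRingEnd ℂ) (z j φ η) * alphaPh ^ ((φ.val : ℤ) - (η.val : ℤ)) with hc
    set f : Fin 3 → Fin (N + 1) → ℝ :=
      fun η h => (c η).re * p h η - (c η).im * q h η with hf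
    have hΛ := lambda_sol hpar0 hdep hΦsub s Λhat hΛhat j hj
    set A := ∑ η ∈ Φ j, Shat j φ η * (starRingEnd ℂ) (z j φ η) with hAdef
    have hBA : (∑ η ∈ Φ j, z j φ η * (starRingEnd ℂ) (Shat j φ η)) = (starRingEnd ℂ) A := by
      rw [hAdef, map_sum]
      refine Finset.sum_congr rfl fun η _ => ?_
      rw [map_mul, Complex.conj_conj]; ring
    have hAval : A = -∑ η ∈ Φ j, c η *
        ∑ h ∈ Finset.univ.filter (fun h => j ∈ pathSet par h ∧ η ∈ Φ h), s h η := by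
      rw [hAdef, ← Finset.sum_neg_distrib]
      refine Finset.sum_congr rfl fun η hη => ?_
      rw [hShat j hj φ hφ η hη, hΛ η hη]
      simp only [hc]
      ring
    have hsre : ∀ (h : Fin (N + 1)) (η : Fin 3), (s h η).re = p h η := fun h η => by
      rw [hs]; simp
    have hsim : ∀ (h : Fin (N + 1)) (η : Fin 3), (s h η).im = q h η := fun h η => by
      rw [hs]; simp
    have hAre : A.re = -∑ η ∈ Φ j,
        ∑ h ∈ Finset.univ.filter (fun h => j ∈ pathSet par h ∧ η ∈ Φ h), f η h := by
      rw [hAval, Complex.neg_re, Complex.re_sum]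
      congr 1
      refine Finset.sum_congr rfl fun η _ => ?_
      rw [Complex.mul_re, Complex.re_sum, Complex.im_sum]
      rw [Finset.mul_sum, Finset.mul_sum, ← Finset.sum_sub_distrib]
      refine Finset.sum_congr rfl fun h _ => ?_
      rw [hsre, hsim, hf]
    have hswap : (∑ η ∈ Φ j,
          ∑ h ∈ Finset.univ.filter (fun h => j ∈ pathSet par h ∧ η ∈ Φ h), f η h)
        = ∑ h ∈ Finset.univ.filter (fun h : Fin (N + 1) => h ≠ 0), ∑ ψ ∈ Φ h,
            (if j ∈ pathSet par h then f ψ h else 0) := by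
      calc (∑ η ∈ Φ j,
              ∑ h ∈ Finset.univ.filter (fun h => j ∈ pathSet par h ∧ η ∈ Φ h), f η h)
          = ∑ η ∈ Φ j, ∑ h : Fin (N + 1),
              if j ∈ pathSet par h ∧ η ∈ Φ h then f η h else 0 :=
            Finset.sum_congr rfl fun η _ => Finset.sum_filter _ _
        _ = ∑ h : Fin (N + 1), ∑ η ∈ Φ j,
              if j ∈ pathSet par h ∧ η ∈ Φ h then f η h else 0 := Finset.sum_comm
        _ = ∑ h : Fin (N + 1), (if h ≠ 0 then
              ∑ ψ ∈ Φ h, (if j ∈ pathSet par h then f ψ h else 0) else 0) := by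
            refine Finset.sum_congr rfl fun h _ => ?_
            by_cases hph : j ∈ pathSet par h
            · have hh0 : h ≠ 0 := by
                rintro rfl
                rw [pathSet_zero hpar0] at hph
                exact absurd hph (Finset.notMem_empty j)
              have hsub : Φ h ⊆ Φ j := Phi_anc hpar0 hΦsub (mem_pathSet.mp hph).2 hj
              rw [if_pos hh0]
              calc (∑ η ∈ Φ j, if j ∈ pathSet par h ∧ η ∈ Φ h then f η h else 0)
                  = ∑ η ∈ Φ j, if η ∈ Φ h then f η h else 0 :=
                    Finset.sum_congr rfl fun η _ => by simp [hph]
                _ = ∑ η ∈ Φ j ∩ Φ h, f η h := Finset.sum_ite_mem _ _ _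
                _ = ∑ η ∈ Φ h, f η h := by rw [Finset.inter_eq_right.mpr hsub]
                _ = ∑ ψ ∈ Φ h, (if j ∈ pathSet par h then f ψ h else 0) :=
                    Finset.sum_congr rfl fun ψ _ => by rw [if_pos hph]
            · simp [hph]
        _ = ∑ h ∈ Finset.univ.filter (fun h : Fin (N + 1) => h ≠ 0), ∑ ψ ∈ Φ h,
              (if j ∈ pathSet par h then f ψ h else 0) := (Finset.sum_filter _ _).symm
    have hpathj : pathSet par j = insert j (pathSet par (par j)) := pathSet_insert hj
    have hjni : j ∉ pathSet par (par j) := notMem_pathSet_parent hpar0 hdep hj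
    have hRdiff : ∀ (h : Fin (N + 1)) (ψ : Fin 3), Rcoef par z j h φ ψ
        = Rcoef par z (par j) h φ ψ + (if j ∈ pathSet par h then 2 * (c ψ).re else 0) := by
      intro h ψ
      by_cases hm : j ∈ pathSet par h
      · rw [if_pos hm]
        simp only [Rcoef]
        rw [hpathj, Finset.insert_inter_of_mem hm,
          Finset.sum_insert (fun hmem => hjni (Finset.mem_inter.mp hmem).1)]
        simp only [hc]
        ring
      · rw [if_neg hm]
        simp only [Rcoef]
        rw [hpathj, Finset.insert_inter_of_notMem hm, add_zero]
    have hXdiff : ∀ (h : Fin (N + 1)) (ψ : Fin 3), Xcoef par z j h φ ψ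
        = Xcoef par z (par j) h φ ψ + (if j ∈ pathSet par h then -2 * (c ψ).im else 0) := by
      intro h ψ
      by_cases hm : j ∈ pathSet par h
      · rw [if_pos hm]
        simp only [Xcoef]
        rw [hpathj, Finset.insert_inter_of_mem hm,
          Finset.sum_insert (fun hmem => hjni (Finset.mem_inter.mp hmem).1)]
        simp only [hc]
        ring
      · rw [if_neg hm]
        simp only [Xcoef]
        rw [hpathj, Finset.insert_inter_of_notMem hm, add_zero]
    have hTdiff : (∑ h ∈ Finset.univ.filter (fun h : Fin (N + 1) => h ≠ 0), ∑ ψ ∈ Φ h,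
          (Rcoef par z j h φ ψ * p h ψ + Xcoef par z j h φ ψ * q h ψ))
        = (∑ h ∈ Finset.univ.filter (fun h : Fin (N + 1) => h ≠ 0), ∑ ψ ∈ Φ h,
            (Rcoef par z (par j) h φ ψ * p h ψ + Xcoef par z (par j) h φ ψ * q h ψ))
          + 2 * ∑ h ∈ Finset.univ.filter (fun h : Fin (N + 1) => h ≠ 0), ∑ ψ ∈ Φ h,
              (if j ∈ pathSet par h then f ψ h else 0) := by
      rw [Finset.mul_sum, ← Finset.sum_add_distrib]
      refine Finset.sum_congr rfl fun h _ => ?_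
      rw [Finset.mul_sum, ← Finset.sum_add_distrib]
      refine Finset.sum_congr rfl fun ψ _ => ?_
      rw [hRdiff h ψ, hXdiff h ψ]
      by_cases hm : j ∈ pathSet par h
      · simp only [if_pos hm, hf]; ring
      · simp only [if_neg hm]; ring
    rw [hvhat j hj φ hφ φ hφ, hIH, hBA, ← hAdef, Complex.add_conj, hTdiff, hAre, hswap]
    push_cast
    ring
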